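/- Let γ(t) = (x(t), y(t), z(t)) be a smooth curve in the strict Walker 3-manifold M_f and let B(t) = (B₁(t), B₂(t), B₃(t)) be a smooth vector field along γ such that g_f(γ′(t), B(t)) = 0 and ∇_{γ′} B = 0 for all t. Let P(t) = γ(t) • (A(γ(t)) B(t)) denote the Euclidean dot product of the position vector γ(t) with A(γ(t)) B(t), where A(γ(t)) is the matrix of g_f at γ(t). Then for all t: y(t) · g_f(∇_{γ′} ∂_y, B) + z(t) · g_f(∇_{γ′} ∂_z, B) = P′(t), where ∇_{γ′} ∂_y and ∇_{γ′} ∂_z are the covariant derivatives along γ of the constant fields ∂_y = (0,1,0) and ∂_z = (0,0,1). In particular, setting C₁(t) = g_f(∇_{γ′} ∂_y, B), C₂(t) = g_f(∇_{γ′} ∂_z, B), C₃(t) = P′(t), the curve satisfies the cylinder equation y(t) C₁(t) + z(t) C₂(t) = C₃(t) for all t. -/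

import Mathlib

open Matrix

/-- The Walker metric `g_f` of a strict Walker 3-manifold at a point `(x, y, z)`. -/
noncomputable def gf (ε : ℝ) (f : ℝ → ℝ → ℝ) (y z : ℝ) (u v : Fin 3 → ℝ) : ℝ :=
  u 0 * v 2 + u 2 * v 0 + ε * u 1 * v 1 + f y z * u 2 * v 2

/-- The matrix `A` of the Walker metric `g_f` at a point `(x, y, z)`. -/
noncomputable def Amat (ε : ℝ) (f : ℝ → ℝ → ℝ) (y z : ℝ) : Matrix (Fin 3) (Fin 3) ℝ :=
  !![0, 0, 1; 0, ε, 0; 1, 0, f y z]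

/-- The covariant derivative `∇_{γ'} ξ` of a vector field `ξ = (X, Y, Z)` along a
curve `γ` in the strict Walker 3-manifold. -/
noncomputable def covD (ε : ℝ) (fy fz : ℝ → ℝ → ℝ) (γ ξ : ℝ → Fin 3 → ℝ) (t : ℝ) :
    Fin 3 → ℝ :=
  ![deriv (fun s => ξ s 0) t
      + (1 / 2) * fy (γ t 1) (γ t 2) *
        (ξ t 1 * deriv (fun s => γ s 2) t + ξ t 2 * deriv (fun s => γ s 1) t)
      + (1 / 2) * fz (γ t 1) (γ t 2) * ξ t 2 * deriv (fun s => γ s 2) t,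
    deriv (fun s => ξ s 1) t
      - (ε / 2) * fy (γ t 1) (γ t 2) * ξ t 2 * deriv (fun s => γ s 2) t,
    deriv (fun s => ξ s 2) t]

/-- If `B` is a vector field along a smooth curve `γ` in `M_f` with
`g_f(γ', B) = 0` and `∇_{γ'} B = 0` (e.g. the parallel binormal of a non-null curve
with zero torsion), and `P(t) = γ(t) • (A(γ(t)) B(t))` is the Euclidean dot product
of the position vector with `A B`, then
`y · g_f(∇_{γ'}∂_y, B) + z · g_f(∇_{γ'}∂_z, B) = P'`, i.e. with
`C₁ = g_f(∇_{γ'}∂_y, B)`, `C₂ = g_f(∇_{γ'}∂_z, B)`, `C₃ = P'`, the curve satisfies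
the cylinder equation `y C₁ + z C₂ = C₃`. -/
theorem stmt_8 (ε : ℝ) (hε : ε = 1 ∨ ε = -1) (f fy fz : ℝ → ℝ → ℝ)
    (hf : ContDiff ℝ (⊤ : ℕ∞) (Function.uncurry f))
    (hfy : ∀ y z : ℝ, HasDerivAt (fun t => f t z) (fy y z) y)
    (hfz : ∀ y z : ℝ, HasDerivAt (fun t => f y t) (fz y z) z)
    (γ B : ℝ → Fin 3 → ℝ)
    (hγ : ∀ i : Fin 3, ContDiff ℝ (⊤ : ℕ∞) fun t => γ t i)
    (hB : ∀ i : Fin 3, ContDiff ℝ (⊤ : ℕ∞) fun t => B t i)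
    (horth : ∀ t : ℝ, gf ε f (γ t 1) (γ t 2)
      (fun i => deriv (fun s => γ s i) t) (B t) = 0)
    (hpar : ∀ t : ℝ, covD ε fy fz γ B t = 0) :
    ∀ t : ℝ,
      (fun C₁ C₂ C₃ : ℝ → ℝ => γ t 1 * C₁ t + γ t 2 * C₂ t = C₃ t)
        (fun t => gf ε f (γ t 1) (γ t 2) (covD ε fy fz γ (fun _ => ![0, 1, 0]) t) (B t))
        (fun t => gf ε f (γ t 1) (γ t 2) (covD ε fy fz γ (fun _ => ![0, 0, 1]) t) (B t))
        (fun t => deriv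
          (fun s => ∑ i : Fin 3, γ s i * (Amat ε f (γ s 1) (γ s 2)).mulVec (B s) i) t) := by
  intro t
  have hγd : ∀ (i : Fin 3) (u : ℝ), HasDerivAt (fun s => γ s i) (deriv (fun s => γ s i) u) u :=
    fun i u => ((hγ i).differentiable (by simp) u).hasDerivAt
  have hBd : ∀ (i : Fin 3) (u : ℝ), HasDerivAt (fun s => B s i) (deriv (fun s => B s i) u) u :=
    fun i u => ((hB i).differentiable (by simp) u).hasDerivAt
  have hFd : HasDerivAt (fun s => f (γ s 1) (γ s 2))
      (fy (γ t 1) (γ t 2) * deriv (fun s => γ s 1) t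
        + fz (γ t 1) (γ t 2) * deriv (fun s => γ s 2) t) t := by
    have hcurve : HasDerivAt (fun s => (γ s 1, γ s 2))
        (deriv (fun s => γ s 1) t, deriv (fun s => γ s 2) t) t := HasDerivAt.prodMk (hγd 1 t) (hγd 2 t)
    have hfd : HasFDerivAt (Function.uncurry f)
        (fderiv ℝ (Function.uncurry f) (γ t 1, γ t 2)) (γ t 1, γ t 2) :=
      ((hf.differentiable (by simp)) _).hasFDerivAt
    have h1 : HasDerivAt (fun y : ℝ => (y, γ t 2)) ((1:ℝ), (0:ℝ)) (γ t 1) :=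
      HasDerivAt.prodMk (hasDerivAt_id _) (hasDerivAt_const _ _)
    have h2 : HasDerivAt (fun z : ℝ => (γ t 1, z)) ((0:ℝ), (1:ℝ)) (γ t 2) :=
      HasDerivAt.prodMk (hasDerivAt_const _ _) (hasDerivAt_id _)
    have c1 : HasDerivAt (fun y : ℝ => f y (γ t 2))
        (fderiv ℝ (Function.uncurry f) (γ t 1, γ t 2) (1, 0)) (γ t 1) := by
      have := hfd.comp_hasDerivAt (γ t 1) h1
      exact this
    have c2 : HasDerivAt (fun z : ℝ => f (γ t 1) z)
        (fderiv ℝ (Function.uncurry f) (γ t 1, γ t 2) (0, 1)) (γ t 2) :=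
      hfd.comp_hasDerivAt (γ t 2) h2
    have e1 := c1.unique (hfy (γ t 1) (γ t 2))
    have e2 := c2.unique (hfz (γ t 1) (γ t 2))
    have hcomp := hfd.comp_hasDerivAt t hcurve
    convert hcomp using 1
    case e'_4 => rfl
    case e'_5 => rfl
    case e'_8 => rfl
    have key : (deriv (fun s => γ s 1) t, deriv (fun s => γ s 2) t)
        = deriv (fun s => γ s 1) t • ((1:ℝ), (0:ℝ))
          + deriv (fun s => γ s 2) t • ((0:ℝ), (1:ℝ)) := by
      simp [Prod.ext_iff]
    rw [key, map_add, ContinuousLinearMap.map_smul, ContinuousLinearMap.map_smul, e1, e2,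
      smul_eq_mul, smul_eq_mul]
    ring
  have hP : HasDerivAt
      (fun s => γ s 0 * B s 2 + γ s 1 * (ε * B s 1)
        + γ s 2 * (B s 0 + f (γ s 1) (γ s 2) * B s 2))
      ((deriv (fun s => γ s 0) t * B t 2 + γ t 0 * deriv (fun s => B s 2) t
        + (deriv (fun s => γ s 1) t * (ε * B t 1) + γ t 1 * (ε * deriv (fun s => B s 1) t)))
        + (deriv (fun s => γ s 2) t * (B t 0 + f (γ t 1) (γ t 2) * B t 2)
          + γ t 2 * (deriv (fun s => B s 0) t
            + ((fy (γ t 1) (γ t 2) * deriv (fun s => γ s 1) t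
                + fz (γ t 1) (γ t 2) * deriv (fun s => γ s 2) t) * B t 2
              + f (γ t 1) (γ t 2) * deriv (fun s => B s 2) t)))) t :=
    (((hγd 0 t).mul (hBd 2 t)).add ((hγd 1 t).mul ((hBd 1 t).const_mul ε))).add
      ((hγd 2 t).mul ((hBd 0 t).add (hFd.mul (hBd 2 t))))
  have hPdef : (fun s => ∑ i : Fin 3, γ s i * (Amat ε f (γ s 1) (γ s 2)).mulVec (B s) i)
      = fun s => γ s 0 * B s 2 + γ s 1 * (ε * B s 1)
          + γ s 2 * (B s 0 + f (γ s 1) (γ s 2) * B s 2) := by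
    funext s
    simp [Amat, Matrix.mulVec, Fin.sum_univ_three, dotProduct, Matrix.vecHead, Matrix.vecTail]
  simp only []
  rw [hPdef, hP.deriv]
  have hp0 := congrFun (hpar t) 0
  have hp1 := congrFun (hpar t) 1
  have hp2 := congrFun (hpar t) 2
  simp only [covD, Matrix.cons_val_zero, Matrix.cons_val_one, Matrix.head_cons,
    Matrix.cons_val_two, Matrix.tail_cons, Pi.zero_apply] at hp0 hp1 hp2
  have ho := horth t
  simp only [gf] at ho
  simp only [gf, covD, Matrix.cons_val_zero, Matrix.cons_val_one, Matrix.head_cons,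
    Matrix.cons_val_two, Matrix.tail_cons, deriv_const]
  have hε2 : ε * ε = 1 := by rcases hε with h | h <;> rw [h] <;> norm_num
  linear_combination (-1 : ℝ) * ho
    - (γ t 0 + γ t 2 * f (γ t 1) (γ t 2)) * hp2
    - γ t 1 * ε * hp1
    - γ t 2 * hp0
    - (γ t 1 * fy (γ t 1) (γ t 2) * B t 2 * deriv (fun s => γ s 2) t / 2) * hε2
    - (γ t 2 * fy (γ t 1) (γ t 2) * B t 1 * deriv (fun s => γ s 2) t / 2) * hε2
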